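/- For every pair of integers n, j with n ≥ 2 and 1 ≤ j ≤ n−1, (1/(2√n))·(n^{1−j/n}·η(j/n))^n ≤ C(n,j)·j^{n−j} ≤ (n^{1−j/n}·η(j/n))^n. -/

import Mathlib

/-!
Write `k = n - j`. Unfolding `eta`, the right-hand side equals
`j ^ k * n ^ n / (j ^ j * k ^ k)`, so both inequalities compare `C(n, j)` with
`n ^ n / (j ^ j * k ^ k)`. The upper bound is one term of the binomial expansion of
`(j + k) ^ n`. The lower bound comes from `C(n, j) = n! / (j! k!)` and the two-sided Stirling
estimates `√(2πm) (m/e)^m ≤ m! ≤ e √m (m/e)^m`, together with `√(jk) ≤ n / 2` and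
`e² ≤ 4 √(2π)`.
-/

noncomputable def varphi (x : ℝ) : ℝ := x ^ (-x) * (1 - x) ^ (-(1 - x))

noncomputable def eta (x : ℝ) : ℝ := x ^ (1 - x) * varphi x

open Real Nat

theorem choose_mul_pow_mul_pow_le_add_pow {R : Type*} [CommSemiring R] [PartialOrder R]
    [IsOrderedRing R] {x y : R} (hx : 0 ≤ x) (hy : 0 ≤ y) {n j : ℕ} (hj : j ≤ n) :
    x ^ j * y ^ (n - j) * n.choose j ≤ (x + y) ^ n := by
  rw [add_pow]
  exact Finset.single_le_sum (f := fun m ↦ x ^ m * y ^ (n - m) * n.choose m)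
    (fun _ _ ↦ by positivity) (Finset.mem_range_succ_iff.2 hj)

theorem choose_le_pow_div_pow_mul_pow {n j k : ℕ} (hn : j + k = n) :
    (n.choose j : ℝ) ≤ (n : ℝ) ^ n / (j ^ j * k ^ k) := by
  have h := choose_mul_pow_mul_pow_le_add_pow (R := ℝ) j.cast_nonneg k.cast_nonneg
    (Nat.le_add_right j k)
  rw [Nat.add_sub_cancel_left, ← Nat.cast_add, hn] at h
  have hpos : (0 : ℝ) < j ^ j * k ^ k := by
    exact_mod_cast Nat.mul_pos Nat.pow_self_pos Nat.pow_self_pos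
  rw [le_div_iff₀' hpos]
  linarith

theorem factorial_le_exp_one_mul_sqrt_mul {n : ℕ} (hn : n ≠ 0) :
    (n ! : ℝ) ≤ exp 1 * √n * (n / exp 1) ^ n := by
  obtain ⟨m, rfl⟩ := Nat.exists_eq_succ_of_ne_zero hn
  have h : Stirling.stirlingSeq (m + 1) ≤ exp 1 / √2 :=
    Stirling.stirlingSeq_one ▸ Stirling.stirlingSeq'_antitone (Nat.zero_le m)
  rw [Stirling.stirlingSeq, div_le_iff₀ (by positivity), sqrt_mul zero_le_two] at h
  exact h.trans_eq (by field_simp)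

theorem pow_div_pow_mul_pow_le_two_sqrt_mul_choose {n j k : ℕ} (hj : j ≠ 0) (hk : k ≠ 0)
    (hn : j + k = n) :
    (n : ℝ) ^ n / (j ^ j * k ^ k) ≤ 2 * √n * n.choose j := by
  have hfact : (n ! : ℝ) = n.choose j * j ! * k ! := by
    have := Nat.choose_mul_factorial_mul_factorial (Nat.le_add_right j k)
    rw [Nat.add_sub_cancel_left] at this
    rw [← hn]; exact_mod_cast this.symm
  have hn0 : (0 : ℝ) < n := by rw [← hn]; positivity
  have hamgm : 2 * (√j * √k) ≤ (n : ℝ) := by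
    have := two_mul_le_add_sq (√j) (√k)
    rw [sq_sqrt j.cast_nonneg, sq_sqrt k.cast_nonneg] at this
    rw [← hn]; push_cast; linarith
  have hconst : exp 1 ^ 2 ≤ 4 * √(2 * π) := by
    have he : exp 1 ^ 2 ≤ 8 := by nlinarith [exp_one_lt_d9, exp_pos 1]
    have hpi : 2 ≤ √(2 * π) := le_sqrt_of_sq_le (by nlinarith [pi_gt_three])
    linarith
  have hsqrt : √(2 * π * n) * √n = √(2 * π) * n := by
    rw [sqrt_mul (by positivity), mul_assoc, mul_self_sqrt n.cast_nonneg]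
  rw [div_le_iff₀ (by positivity),
    ← mul_le_mul_iff_right₀ (a := √(2 * π * n)) (by positivity)]
  calc √(2 * π * n) * (n : ℝ) ^ n = exp 1 ^ n * (√(2 * π * n) * (n / exp 1) ^ n) := by
        rw [div_pow]; field_simp
    _ ≤ exp 1 ^ n * (n.choose j * j ! * k !) := by
        grw [Stirling.le_factorial_stirling n, hfact]
    _ ≤ exp 1 ^ n *
          (n.choose j * (exp 1 * √j * (j / exp 1) ^ j) * (exp 1 * √k * (k / exp 1) ^ k)) := by
        grw [factorial_le_exp_one_mul_sqrt_mul hj, factorial_le_exp_one_mul_sqrt_mul hk]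
    _ = exp 1 ^ 2 * (√j * √k) * (n.choose j * (j ^ j * k ^ k)) := by
        rw [← hn, div_pow, div_pow, pow_add]; field_simp
    _ ≤ 4 * √(2 * π) * (n / 2) * (n.choose j * (j ^ j * k ^ k)) := by
        gcongr
        linarith
    _ = √(2 * π * n) * (2 * √n * n.choose j * (j ^ j * k ^ k)) := by
        linear_combination (-2 * (n.choose j * (j ^ j * k ^ k) : ℝ)) * hsqrt

theorem rpow_pow_eq_pow_of_mul_eq {a y : ℝ} (ha : 0 ≤ a) {n m : ℕ} (h : y * n = m) :
    (a ^ y) ^ n = a ^ m := by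
  rw [← rpow_mul_natCast ha, h, rpow_natCast]

theorem one_sub_div_eq_div_of_add_eq {n j k : ℕ} (hn : j + k = n) (hn0 : (n : ℝ) ≠ 0) :
    1 - (j : ℝ) / n = k / n := by
  rw [← hn] at hn0 ⊢; field_simp; push_cast; ring

theorem varphi_div_pow {n j k : ℕ} (hj : j ≠ 0) (hk : k ≠ 0) (hn : j + k = n) :
    varphi (j / n) ^ n = (n : ℝ) ^ n / (j ^ j * k ^ k) := by
  have hn0 : (n : ℝ) ≠ 0 := by rw [← hn]; positivity
  rw [varphi, one_sub_div_eq_div_of_add_eq hn hn0, mul_pow, rpow_neg (by positivity),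
    rpow_neg (by positivity), inv_pow, inv_pow,
    rpow_pow_eq_pow_of_mul_eq (by positivity) (m := j) (by field_simp),
    rpow_pow_eq_pow_of_mul_eq (by positivity) (m := k) (by field_simp),
    div_pow, div_pow, ← hn, pow_add]
  field_simp

theorem pow_rpow_mul_eta_div_pow {n j k : ℕ} (hj : j ≠ 0) (hk : k ≠ 0) (hn : j + k = n) :
    ((n : ℝ) ^ (1 - (j : ℝ) / n) * eta (j / n)) ^ n =
      j ^ k * ((n : ℝ) ^ n / (j ^ j * k ^ k)) := by
  have hn0 : (n : ℝ) ≠ 0 := by rw [← hn]; positivity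
  rw [eta, ← mul_assoc, ← mul_rpow (by positivity) (by positivity), mul_pow,
    varphi_div_pow hj hk hn, one_sub_div_eq_div_of_add_eq hn hn0, mul_div_cancel₀ _ hn0,
    rpow_pow_eq_pow_of_mul_eq (by positivity) (m := k) (by field_simp)]

theorem stmt_9 (n j : ℕ) (hj1 : 1 ≤ j) (hj2 : j ≤ n - 1) :
    (1 / (2 * Real.sqrt n)) * ((n : ℝ) ^ (1 - (j : ℝ) / n) * eta ((j : ℝ) / n)) ^ n ≤
      (Nat.choose n j : ℝ) * (j : ℝ) ^ (n - j) ∧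
    (Nat.choose n j : ℝ) * (j : ℝ) ^ (n - j) ≤
      ((n : ℝ) ^ (1 - (j : ℝ) / n) * eta ((j : ℝ) / n)) ^ n := by
  have hjk : j + (n - j) = n := by omega
  have hsqrt : (0 : ℝ) < √n := sqrt_pos.2 (by exact_mod_cast (show 0 < n by omega))
  rw [pow_rpow_mul_eta_div_pow (by omega) (by omega) hjk]
  constructor
  · calc 1 / (2 * √n) * ((j : ℝ) ^ (n - j) * (n ^ n / (j ^ j * (n - j : ℕ) ^ (n - j))))
        ≤ 1 / (2 * √n) * (j ^ (n - j) * (2 * √n * n.choose j)) := by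
          grw [pow_div_pow_mul_pow_le_two_sqrt_mul_choose (by omega) (by omega) hjk]
      _ = n.choose j * (j : ℝ) ^ (n - j) := by field_simp
  · grw [choose_le_pow_div_pow_mul_pow hjk, mul_comm]
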